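/- Let π be a density on (0,∞) satisfying A1 and A2, let t ≥ 1 be an integer, and suppose ∫_0^∞ α^t π(α) dα < ∞. Then for every ε > 0 there exists M > 0 such that for every n ≥ 1, M · ∫_0^ε (α^t/α^{(n)}) π(α) dα ≥ ∫_ε^∞ (α^t/α^{(n)}) π(α) dα. -/

import Mathlib

open MeasureTheory Filter Topology
open scoped Classical BigOperators ENNReal

noncomputable section

/-- Ascending factorial `α^{(n)} = α (α+1) ⋯ (α+n−1)`. -/
def ascFactorial (α : ℝ) (n : ℕ) : ℝ := ∏ i ∈ Finset.range n, (α + (i : ℝ))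

/-- (A1): `π` is a probability density on `(0,∞)`. -/
def IsPriorDensity (π : ℝ → ℝ) : Prop :=
  Measurable π ∧ (∀ α, 0 ≤ π α) ∧ (∫ α in Set.Ioi (0:ℝ), π α) = 1

/-- (A2): polynomial behaviour of `π` near the origin, with constants `ε ∈ (0,1)`,
`δ > 0`, `β > 0`. -/
def PolyAtZero (π : ℝ → ℝ) (ε δ β : ℝ) : Prop :=
  ε ∈ Set.Ioo (0:ℝ) 1 ∧ 0 < δ ∧ 0 < β ∧
    ∀ α ∈ Set.Ioo (0:ℝ) ε, δ⁻¹ * α ^ β ≤ π α ∧ π α ≤ δ * α ^ β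

/-- The lower incomplete Gamma function `γ(x,y) = ∫_0^y z^{x−1} e^{−z} dz`. -/
def lowerGamma (x y : ℝ) : ℝ := ∫ z in (0:ℝ)..y, z ^ (x - 1) * Real.exp (-z)

/-- `C(n,t,s) = (∫_0^∞ α^s/α^{(n)} π dα)/(∫_0^∞ α^t/α^{(n)} π dα)`. -/
def Cratio (π : ℝ → ℝ) (n t s : ℕ) : ℝ :=
  (∫ α in Set.Ioi (0:ℝ), α ^ s / ascFactorial α n * π α) /
  (∫ α in Set.Ioi (0:ℝ), α ^ t / ascFactorial α n * π α)

/-! For `α > ε` the weight `1/α^{(n)}` is at most `1/ε^{(n)}`, so the tail integral is at most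
`C/ε^{(n)}`, where `C` is the `t`-th moment of `π`. The lower bound in (A2) gives an interval
`(a, b) ⊆ (0, ε)` on which `α^t π(α) ≥ m > 0`, and there `1/α^{(n)} ≥ 1/ε^{(n)}`, so the integral
over `(0, ε)` is at least `m (b - a)/ε^{(n)}`. The factor `1/ε^{(n)}` cancels, and
`M = (C + 1)/(m (b - a))` works for every `n`. Since `t, n ≥ 1`, the weight `α^t/α^{(n)} ≤ α^{t-1}`
is bounded near `0`, so the integral over `(0, ε)` is not the junk value of a non-integrable one. -/

open Set

lemma ascFactorial_pos {α : ℝ} (hα : 0 < α) (n : ℕ) : 0 < ascFactorial α n :=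
  Finset.prod_pos fun _ _ => by positivity

lemma ascFactorial_le_ascFactorial {a b : ℝ} (ha : 0 ≤ a) (hab : a ≤ b) (n : ℕ) :
    ascFactorial a n ≤ ascFactorial b n :=
  Finset.prod_le_prod (fun _ _ => by positivity) fun _ _ => by linarith

lemma measurable_ascFactorial (n : ℕ) : Measurable fun α => ascFactorial α n :=
  Finset.measurable_prod _ fun _ _ => measurable_id.add_const _

lemma le_ascFactorial {α : ℝ} (hα : 0 ≤ α) {n : ℕ} (hn : 1 ≤ n) : α ≤ ascFactorial α n := by
  obtain ⟨k, rfl⟩ := Nat.exists_eq_add_of_le' hn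
  rw [ascFactorial, Finset.prod_range_succ', Nat.cast_zero, add_zero]
  exact le_mul_of_one_le_left hα <| Finset.one_le_prod fun i _ => by
    push_cast; linarith

lemma pow_div_ascFactorial_le {α : ℝ} (hα : 0 < α) {t n : ℕ} (ht : 1 ≤ t) (hn : 1 ≤ n) :
    α ^ t / ascFactorial α n ≤ α ^ (t - 1) := by
  rw [div_le_iff₀ (ascFactorial_pos hα n), ← Nat.sub_add_cancel ht, pow_succ, Nat.add_sub_cancel]
  exact mul_le_mul_of_nonneg_left (le_ascFactorial hα.le hn) (by positivity)

lemma PolyAtZero.exists_Ioo_pos_le {π : ℝ → ℝ} {ε₀ δ β : ℝ} (hA2 : PolyAtZero π ε₀ δ β) (t : ℕ)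
    {ε : ℝ} (hε : 0 < ε) :
    ∃ a b m : ℝ, 0 < a ∧ a < b ∧ b ≤ ε ∧ 0 < m ∧ ∀ α ∈ Ioo a b, m ≤ α ^ t * π α := by
  obtain ⟨⟨hε₀, -⟩, hδ, hβ, hπ⟩ := hA2
  set b := min ε ε₀
  have hb : 0 < b := lt_min hε hε₀
  refine ⟨b / 2, b, (b / 2) ^ t * (δ⁻¹ * (b / 2) ^ β), by positivity, by linarith,
    min_le_left _ _, by positivity, ?_⟩
  rintro α ⟨hα, hαb⟩
  have hα0 : 0 < α := (half_pos hb).trans hα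
  calc (b / 2) ^ t * (δ⁻¹ * (b / 2) ^ β) ≤ α ^ t * (δ⁻¹ * α ^ β) := by gcongr
    _ ≤ α ^ t * π α := by
      gcongr
      exact (hπ α ⟨hα0, hαb.trans_le (min_le_right _ _)⟩).1

section PriorIntegrals

variable {π : ℝ → ℝ} {ε₀ δ β ε : ℝ} {t n : ℕ}

lemma integrableOn_Ioo_pow_div_ascFactorial_mul (hπ : IntegrableOn π (Ioo 0 ε))
    (ht : 1 ≤ t) (hn : 1 ≤ n) :
    IntegrableOn (fun α => α ^ t / ascFactorial α n * π α) (Ioo 0 ε) := by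
  refine hπ.bdd_mul (c := ε ^ (t - 1)) ?_ ?_
  · exact ((measurable_id.pow_const t).div (measurable_ascFactorial n)).aestronglyMeasurable
  · refine (ae_restrict_iff' measurableSet_Ioo).2 (Eventually.of_forall fun α ⟨hα0, hαε⟩ => ?_)
    rw [Real.norm_of_nonneg (div_nonneg (by positivity) (ascFactorial_pos hα0 n).le)]
    exact (pow_div_ascFactorial_le hα0 ht hn).trans (pow_le_pow_left₀ hα0.le hαε.le _)

lemma setIntegral_Ioi_pow_div_ascFactorial_mul_le (hπ0 : ∀ α, 0 ≤ π α)
    (hmom : IntegrableOn (fun α => α ^ t * π α) (Ioi 0)) (hε : 0 < ε) :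
    ∫ α in Ioi ε, α ^ t / ascFactorial α n * π α ≤
      (∫ α in Ioi 0, α ^ t * π α) / ascFactorial ε n := by
  have hmom_nonneg : ∀ α ∈ Ioi (0 : ℝ), 0 ≤ α ^ t * π α := fun α hα =>
    mul_nonneg (pow_nonneg (le_of_lt hα) _) (hπ0 α)
  calc ∫ α in Ioi ε, α ^ t / ascFactorial α n * π α
      ≤ ∫ α in Ioi ε, α ^ t * π α / ascFactorial ε n := by
        refine integral_mono_of_nonneg ?_ ((hmom.mono_set (Ioi_subset_Ioi hε.le)).div_const _) ?_
        all_goals refine (ae_restrict_iff' measurableSet_Ioi).2 (Eventually.of_forall fun α hα => ?_)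
        · have hα0 : 0 < α := hε.trans hα
          have := ascFactorial_pos hα0 n
          have := hπ0 α
          positivity
        · dsimp only
          rw [div_mul_eq_mul_div]
          exact div_le_div_of_nonneg_left (hmom_nonneg α (hε.trans hα)) (ascFactorial_pos hε n)
            (ascFactorial_le_ascFactorial hε.le (le_of_lt hα) n)
    _ ≤ (∫ α in Ioi 0, α ^ t * π α) / ascFactorial ε n := by
        rw [integral_div]
        refine div_le_div_of_nonneg_right ?_ (ascFactorial_pos hε n).le
        exact setIntegral_mono_set hmom
          ((ae_restrict_iff' measurableSet_Ioi).2 (Eventually.of_forall hmom_nonneg))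
          (Ioi_subset_Ioi hε.le).eventuallyLE

lemma exists_pos_div_ascFactorial_le_setIntegral_Ioo (hπ0 : ∀ α, 0 ≤ π α)
    (hπ : IntegrableOn π (Ioo 0 ε)) (hA2 : PolyAtZero π ε₀ δ β) (ht : 1 ≤ t) (hε : 0 < ε) :
    ∃ c > 0, ∀ n, 1 ≤ n →
      c / ascFactorial ε n ≤ ∫ α in Ioo 0 ε, α ^ t / ascFactorial α n * π α := by
  obtain ⟨a, b, m, ha, hab, hbε, hm, hlow⟩ := hA2.exists_Ioo_pos_le t hε
  refine ⟨m * (b - a), mul_pos hm (sub_pos.2 hab), fun n hn => ?_⟩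
  have hint := integrableOn_Ioo_pow_div_ascFactorial_mul hπ ht hn
  have hsub : Ioo a b ⊆ Ioo 0 ε := Ioo_subset_Ioo ha.le hbε
  have hpoint : ∀ α ∈ Ioo a b, m / ascFactorial ε n ≤ α ^ t / ascFactorial α n * π α := by
    intro α hα
    have hα0 : 0 < α := ha.trans hα.1
    rw [div_mul_eq_mul_div]
    exact div_le_div₀ (mul_nonneg (by positivity) (hπ0 α)) (hlow α hα)
      (ascFactorial_pos hα0 n)
      (ascFactorial_le_ascFactorial hα0.le (hα.2.le.trans hbε) n)
  calc m * (b - a) / ascFactorial ε n = m / ascFactorial ε n * volume.real (Ioo a b) := by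
        rw [Real.volume_real_Ioo_of_le hab.le]; ring
    _ ≤ ∫ α in Ioo a b, α ^ t / ascFactorial α n * π α :=
        setIntegral_ge_of_const_le_real measurableSet_Ioo measure_Ioo_lt_top.ne hpoint
          (hint.mono_set hsub)
    _ ≤ ∫ α in Ioo 0 ε, α ^ t / ascFactorial α n * π α :=
        setIntegral_mono_set hint
          ((ae_restrict_iff' measurableSet_Ioo).2 (Eventually.of_forall fun α hα =>
            mul_nonneg (div_nonneg (pow_nonneg hα.1.le _) (ascFactorial_pos hα.1 n).le) (hπ0 α)))
          hsub.eventuallyLE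

end PriorIntegrals

/-- Lemma S.3 of the paper.
Let `π` satisfy (A1)–(A2), let `t ≥ 1` and suppose `∫_0^∞ α^t π(α) dα < ∞`.  Then for
every `ε > 0` there is `M > 0` such that for every `n ≥ 1`,
`M ∫_0^ε α^t/α^{(n)} π(α) dα ≥ ∫_ε^∞ α^t/α^{(n)} π(α) dα`. -/
theorem prior_tail_integral_domination
    (π : ℝ → ℝ) (ε₀ δ β : ℝ) (t : ℕ)
    (hA1 : IsPriorDensity π) (hA2 : PolyAtZero π ε₀ δ β) (ht : 1 ≤ t)
    (hmom : IntegrableOn (fun α => α ^ t * π α) (Set.Ioi (0:ℝ))) :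
    ∀ ε : ℝ, 0 < ε → ∃ M : ℝ, 0 < M ∧
      ∀ n : ℕ, 1 ≤ n →
        (∫ α in Set.Ioi ε, α ^ t / ascFactorial α n * π α)
          ≤ M * ∫ α in Set.Ioo (0:ℝ) ε, α ^ t / ascFactorial α n * π α := by
  obtain ⟨-, hπ0, hπ1⟩ := hA1
  have hπ : IntegrableOn π (Ioi 0) := .of_integral_ne_zero (by rw [hπ1]; exact one_ne_zero)
  intro ε hε
  obtain ⟨c, hc, hhead⟩ := exists_pos_div_ascFactorial_le_setIntegral_Ioo hπ0
    (hπ.mono_set Ioo_subset_Ioi_self) hA2 ht hε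
  set C := ∫ α in Ioi 0, α ^ t * π α
  have hC : 0 ≤ C := setIntegral_nonneg measurableSet_Ioi fun α hα =>
    mul_nonneg (pow_nonneg (le_of_lt hα) _) (hπ0 α)
  refine ⟨(C + 1) / c, by positivity, fun n hn => ?_⟩
  have hasc := ascFactorial_pos hε n
  calc _ ≤ C / ascFactorial ε n := setIntegral_Ioi_pow_div_ascFactorial_mul_le hπ0 hmom hε
    _ ≤ (C + 1) / c * (c / ascFactorial ε n) := by
        rw [div_mul_div_cancel₀ hc.ne']
        gcongr
        linarith
    _ ≤ _ := by
        gcongr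
        exact hhead n hn
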